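/- The Benders cut is valid: for any z ∈ [0,1]^T with Σ_t z_t ≥ 1, with σ a cost-sorting permutation and t* the critical index defined from some reference capacity vector ẑ, the inequality Φ(z) ≥ c_{σ(t*)} − Σ_{i=1}^{t*−1} (c_{σ(t*)} − c_{σ(i)}) z_{σ(i)} holds, where Φ(z) = min { Σ_t c_t x_t : Σ_t x_t = 1, 0 ≤ x ≤ z }. -/
import Mathlib


/-- Validity of the Benders cut: for any capacity vector `z ∈ [0,1]^T` with
`∑ z_t ≥ 1`, a cost-sorting permutation `σ`, and any index `t*`,
`Φ(z) ≥ c_{σ(t*)} − ∑_{i<t*} (c_{σ(t*)} − c_{σ(i)}) z_{σ(i)}`. -/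
theorem benders_cut_valid (T : ℕ) (hT : 1 ≤ T) (c : Fin T → ℝ)
    (σ : Equiv.Perm (Fin T))
    (hsort : ∀ s s' : Fin T, s ≤ s' → c (σ s) ≤ c (σ s'))
    (tstar : Fin T)
    (z : Fin T → ℝ) (hz : ∀ t, 0 ≤ z t ∧ z t ≤ 1) (hzsum : 1 ≤ ∑ t, z t) :
    c (σ tstar) -
        ∑ i ∈ Finset.univ.filter (fun i => i < tstar),
          (c (σ tstar) - c (σ i)) * z (σ i) ≤
      sInf {y : ℝ | ∃ x : Fin T → ℝ,
        (∀ t, 0 ≤ x t ∧ x t ≤ z t) ∧ (∑ t, x t) = 1 ∧ y = ∑ t, c t * x t} := by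
  have hSz : (0:ℝ) < ∑ t, z t := lt_of_lt_of_le one_pos hzsum
  apply le_csInf
  · -- nonempty: x t = z t / ∑ z
    refine ⟨∑ t, c t * (z t / ∑ t, z t), fun t => z t / ∑ t, z t, ?_, ?_, rfl⟩
    · intro t
      constructor
      · exact div_nonneg (hz t).1 hSz.le
      · exact div_le_self (hz t).1 (by linarith)
    · rw [← Finset.sum_div]
      field_simp
  · rintro y ⟨x, hx, hxsum, rfl⟩
    set S := Finset.univ.filter (fun i : Fin T => i < tstar) with hS
    set Sc := Finset.univ.filter (fun i : Fin T => ¬ i < tstar) with hSc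
    have hsplit : ∀ f : Fin T → ℝ, ∑ i ∈ S, f i + ∑ i ∈ Sc, f i = ∑ i, f i := by
      intro f
      exact Finset.sum_filter_add_sum_filter_not Finset.univ _ f
    have hreidx : ∑ i, c (σ i) * x (σ i) = ∑ t, c t * x t :=
      Equiv.sum_comp σ (fun t => c t * x t)
    have hxreidx : ∑ i, x (σ i) = 1 := by
      rw [Equiv.sum_comp σ x]; exact hxsum
    have h1 : ∑ t, c t * x t
        = ∑ i ∈ S, c (σ i) * x (σ i) + ∑ i ∈ Sc, c (σ i) * x (σ i) := by
      rw [hsplit (fun i => c (σ i) * x (σ i)), hreidx]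
    have hx1 : ∑ i ∈ S, x (σ i) + ∑ i ∈ Sc, x (σ i) = 1 := by
      rw [hsplit (fun i => x (σ i))]; exact hxreidx
    have hQ : ∑ i ∈ Sc, x (σ i) = 1 - ∑ i ∈ S, x (σ i) := by linarith
    have h2 : c (σ tstar) * ∑ i ∈ Sc, x (σ i) ≤ ∑ i ∈ Sc, c (σ i) * x (σ i) := by
      rw [Finset.mul_sum]
      apply Finset.sum_le_sum
      intro i hi
      have hti : tstar ≤ i := le_of_not_gt (Finset.mem_filter.mp hi).2
      exact mul_le_mul_of_nonneg_right (hsort _ _ hti) (hx _).1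
    have h2' : c (σ tstar) - c (σ tstar) * ∑ i ∈ S, x (σ i)
        ≤ ∑ i ∈ Sc, c (σ i) * x (σ i) := by
      calc c (σ tstar) - c (σ tstar) * ∑ i ∈ S, x (σ i)
          = c (σ tstar) * ∑ i ∈ Sc, x (σ i) := by rw [hQ]; ring
        _ ≤ _ := h2
    have hexp : ∑ i ∈ S, (c (σ tstar) - c (σ i)) * x (σ i)
        = c (σ tstar) * ∑ i ∈ S, x (σ i) - ∑ i ∈ S, c (σ i) * x (σ i) := by
      rw [Finset.mul_sum, ← Finset.sum_sub_distrib]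
      exact Finset.sum_congr rfl (fun i _ => by ring)
    have h3 : ∑ i ∈ S, (c (σ tstar) - c (σ i)) * x (σ i)
        ≤ ∑ i ∈ S, (c (σ tstar) - c (σ i)) * z (σ i) := by
      apply Finset.sum_le_sum
      intro i hi
      have hit : i ≤ tstar := le_of_lt (Finset.mem_filter.mp hi).2
      exact mul_le_mul_of_nonneg_left (hx _).2 (sub_nonneg.mpr (hsort _ _ hit))
    linarith
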